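/- Let T_{a,b} be the triangle with vertices (0,0), (1,0), (a,b), and let 0 < η ≤ 1. Then C₁(T_{a,ηb}) ≤ C₁(T_{a,b}), where C₁(T) = sup{‖u‖_{L²(T)}/‖∇u‖_{L²(T)} : u ∈ H¹(T), u ≠ 0, ∫_T u = 0}. -/

import Mathlib

open MeasureTheory

noncomputable def pd1 (u : ℝ × ℝ → ℝ) (p : ℝ × ℝ) : ℝ := fderiv ℝ u p (1, 0)
noncomputable def pd2 (u : ℝ × ℝ → ℝ) (p : ℝ × ℝ) : ℝ := fderiv ℝ u p (0, 1)

/-- The optimal Poincaré constant `C₁(T)`: the supremum of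
`‖u‖_{L²(T)} / ‖∇u‖_{L²(T)}` over nonzero `u ∈ H¹(T)` with mean zero on `T`. -/
noncomputable def C1const (T : Set (ℝ × ℝ)) : ℝ :=
  sSup {r : ℝ | ∃ u : ℝ × ℝ → ℝ, ContDiff ℝ 1 u ∧ (∫ p in T, u p) = 0 ∧
    (∫ p in T, (u p)^2) ≠ 0 ∧
    r = Real.sqrt (∫ p in T, (u p)^2) /
        Real.sqrt (∫ p in T, ((pd1 u p)^2 + (pd2 u p)^2))}

/-- The triangle with vertices `(0,0)`, `(1,0)`, `(a,b)`. -/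
noncomputable def tri (a b : ℝ) : Set (ℝ × ℝ) :=
  convexHull ℝ ({((0:ℝ), (0:ℝ)), ((1:ℝ), (0:ℝ)), (a, b)} : Set (ℝ × ℝ))

/-- The set whose supremum is `C1const`. -/
def Sset (T : Set (ℝ × ℝ)) : Set ℝ :=
  {r : ℝ | ∃ u : ℝ × ℝ → ℝ, ContDiff ℝ 1 u ∧ (∫ p in T, u p) = 0 ∧
    (∫ p in T, (u p)^2) ≠ 0 ∧
    r = Real.sqrt (∫ p in T, (u p)^2) /
        Real.sqrt (∫ p in T, ((pd1 u p)^2 + (pd2 u p)^2))}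

lemma C1const_eq (T : Set (ℝ × ℝ)) : C1const T = sSup (Sset T) := rfl

lemma Sset_nonneg (T : Set (ℝ × ℝ)) : ∀ r ∈ Sset T, 0 ≤ r := by
  rintro r ⟨u, -, -, -, rfl⟩
  exact div_nonneg (Real.sqrt_nonneg _) (Real.sqrt_nonneg _)

noncomputable def Lmap (t : ℝ) : (ℝ × ℝ) →L[ℝ] (ℝ × ℝ) :=
  (ContinuousLinearMap.fst ℝ ℝ ℝ).prod (t • ContinuousLinearMap.snd ℝ ℝ ℝ)

lemma Lmap_apply (t : ℝ) (p : ℝ × ℝ) : Lmap t p = (p.1, t * p.2) := by simp [Lmap]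

lemma Lmap_det (t : ℝ) : (Lmap t).det = t := by
  rw [ContinuousLinearMap.det, ← LinearMap.det_toMatrix (Module.Basis.finTwoProd ℝ),
    show Matrix.det ((LinearMap.toMatrix (Module.Basis.finTwoProd ℝ) (Module.Basis.finTwoProd ℝ))
      ((Lmap t) : (ℝ×ℝ) →ₗ[ℝ] (ℝ×ℝ))) = _ from Matrix.det_fin_two _]
  simp [LinearMap.toMatrix_apply, Lmap, Module.Basis.finTwoProd]

lemma tri_compact (a b : ℝ) : IsCompact (tri a b) :=
  (Set.toFinite _).isCompact_convexHull (𝕜 := ℝ)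

lemma tri_meas (a b : ℝ) : MeasurableSet (tri a b) := (tri_compact a b).measurableSet

lemma Lmap_image (a b t : ℝ) : Lmap t '' tri a b = tri a (t * b) := by
  unfold tri
  rw [show (Lmap t '' _ ) = ((Lmap t) : (ℝ×ℝ) →ₗ[ℝ] (ℝ×ℝ)) '' _ from rfl,
    LinearMap.image_convexHull]
  congr 1
  simp [Set.image_insert_eq, Lmap_apply]

lemma cov (a b t : ℝ) (ht : 0 < t) (g : ℝ × ℝ → ℝ) :
    (∫ p in tri a (t*b), g p) = t * ∫ p in tri a b, g (Lmap t p) := by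
  rw [← Lmap_image a b t]
  rw [integral_image_eq_integral_abs_det_fderiv_smul volume (tri_meas a b)
    (fun x _ => (Lmap t).hasFDerivAt.hasFDerivWithinAt)
    (fun x _ y _ h => by
      have h' := h
      rw [Lmap_apply, Lmap_apply, Prod.ext_iff] at h'
      exact Prod.ext h'.1 (mul_left_cancel₀ ht.ne' h'.2)) g]
  simp [Lmap_det, abs_of_pos ht, ← integral_smul, smul_eq_mul, integral_const_mul]

lemma step (a b c : ℝ) (hb : 0 < b) (hc : 0 < c) {r : ℝ}
    (hr : r ∈ Sset (tri a c)) : ∃ r' ∈ Sset (tri a b), r ≤ max (c/b) 1 * r' := by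
  obtain ⟨u, hu, h0, hN, hrq⟩ := hr
  set t : ℝ := c / b with ht_def
  have ht : 0 < t := div_pos hc hb
  have htb : t * b = c := div_mul_cancel₀ c hb.ne'
  set v : ℝ × ℝ → ℝ := fun p => u (Lmap t p) with hv_def
  have hdu : Differentiable ℝ u := hu.differentiable one_ne_zero
  have hv : ContDiff ℝ 1 v := hu.comp (Lmap t).contDiff
  have hfd : ∀ p, fderiv ℝ v p = (fderiv ℝ u (Lmap t p)).comp (Lmap t : (ℝ×ℝ) →L[ℝ] (ℝ×ℝ)) := by
    intro p
    rw [show v = u ∘ (Lmap t) from rfl, fderiv_comp p (hdu _) (Lmap t).differentiableAt,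
      (Lmap t).fderiv]
  have key1 : ∀ p, pd1 v p = pd1 u (Lmap t p) := by
    intro p
    rw [pd1, hfd p]
    simp [pd1, Lmap_apply]
  have key2 : ∀ p, pd2 v p = t * pd2 u (Lmap t p) := by
    intro p
    rw [pd2, hfd p]
    have : Lmap t ((0:ℝ), (1:ℝ)) = t • ((0:ℝ), (1:ℝ)) := by
      rw [Lmap_apply]; simp [Prod.smul_def]
    rw [ContinuousLinearMap.comp_apply, this, ContinuousLinearMap.map_smul, smul_eq_mul]
    rfl
  -- continuity and integrability
  have hc1 : Continuous (pd1 u) :=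
    ((hu.continuous_fderiv one_ne_zero).clm_apply continuous_const)
  have hc2 : Continuous (pd2 u) :=
    ((hu.continuous_fderiv one_ne_zero).clm_apply continuous_const)
  have int1 : IntegrableOn (fun q => (pd1 u q)^2) (tri a c) :=
    (hc1.pow 2).continuousOn.integrableOn_compact (tri_compact a c)
  have int2 : IntegrableOn (fun q => (pd2 u q)^2) (tri a c) :=
    (hc2.pow 2).continuousOn.integrableOn_compact (tri_compact a c)
  set N : ℝ := ∫ p in tri a c, (u p)^2 with hNdef
  set A : ℝ := ∫ p in tri a c, (pd1 u p)^2 with hAdef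
  set B : ℝ := ∫ p in tri a c, (pd2 u p)^2 with hBdef
  have hN0 : 0 ≤ N := setIntegral_nonneg (tri_meas a c) (fun x _ => sq_nonneg _)
  have hA0 : 0 ≤ A := setIntegral_nonneg (tri_meas a c) (fun x _ => sq_nonneg _)
  have hB0 : 0 ≤ B := setIntegral_nonneg (tri_meas a c) (fun x _ => sq_nonneg _)
  -- integral identities
  have covu := cov a b t ht u
  have covu2 := cov a b t ht (fun p => (u p)^2)
  have covg := cov a b t ht (fun q => (pd1 u q)^2 + t^2 * (pd2 u q)^2)
  rw [htb] at covu covu2 covg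
  have I1 : (∫ p in tri a b, v p) = 0 := by
    have h := covu
    rw [h0] at h
    exact ((mul_eq_zero.mp h.symm).resolve_left ht.ne')
  have I2 : (∫ p in tri a b, (v p)^2) = t⁻¹ * N := by
    rw [hNdef, covu2]
    field_simp
    rfl
  have hDc : (∫ p in tri a c, ((pd1 u p)^2 + (pd2 u p)^2)) = A + B := by
    rw [hAdef, hBdef, ← integral_add int1 int2]
  have hgc : (∫ q in tri a c, ((pd1 u q)^2 + t^2 * (pd2 u q)^2)) = A + t^2 * B := by
    rw [hAdef, hBdef, ← integral_const_mul, ← integral_add int1 (int2.const_mul _)]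
  have I3 : (∫ p in tri a b, ((pd1 v p)^2 + (pd2 v p)^2)) = t⁻¹ * (A + t^2 * B) := by
    have : (∫ p in tri a b, ((pd1 v p)^2 + (pd2 v p)^2))
        = ∫ p in tri a b, ((pd1 u (Lmap t p))^2 + t^2 * (pd2 u (Lmap t p))^2) := by
      congr 1
      ext p
      rw [key1 p, key2 p]
      ring
    rw [this, ← hgc, covg]
    field_simp
  -- the witness
  have hI2ne : (∫ p in tri a b, (v p)^2) ≠ 0 := by
    rw [I2]
    exact mul_ne_zero (inv_ne_zero ht.ne') hN
  refine ⟨_, ⟨v, hv, I1, hI2ne, rfl⟩, ?_⟩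
  -- the inequality
  set m : ℝ := max t 1 with hmdef
  have hm1 : (1:ℝ) ≤ m := le_max_right _ _
  have hmt : t ≤ m := le_max_left _ _
  have hm0 : 0 ≤ m := zero_le_one.trans hm1
  rw [hrq, hDc, I2, I3]
  clear_value N A B
  clear hrq hNdef hAdef hBdef covu covu2 covg I1 I2 I3 hDc hgc hI2ne hN h0 int1 int2 key1 key2 hfd hv hdu hc1 hc2
  by_cases hD : A + B = 0
  · have hA : A = 0 := by linarith [hB0, hA0]
    have hB : B = 0 := by linarith [hA0]
    rw [hA, hB]
    simp
  · have hDpos : 0 < A + B := lt_of_le_of_ne (by linarith) (Ne.symm hD)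
    have hD2pos : 0 < A + t^2 * B := by
      rcases lt_or_ge 0 B with h | h
      · have : 0 < t^2 * B := by positivity
        linarith
      · have hB : B = 0 := le_antisymm h hB0
        rw [hB] at hDpos ⊢
        linarith [hDpos]
    have hx : 0 < Real.sqrt (A + B) := Real.sqrt_pos.2 hDpos
    have hy : 0 < Real.sqrt (A + t^2 * B) := Real.sqrt_pos.2 hD2pos
    have hti : (0:ℝ) ≤ t⁻¹ := (inv_pos.2 ht).le
    have hsplit1 : Real.sqrt (t⁻¹ * N) = Real.sqrt t⁻¹ * Real.sqrt N :=
      Real.sqrt_mul hti N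
    have hsplit2 : Real.sqrt (t⁻¹ * (A + t^2 * B))
        = Real.sqrt t⁻¹ * Real.sqrt (A + t^2 * B) := Real.sqrt_mul hti _
    have hst : 0 < Real.sqrt t⁻¹ := Real.sqrt_pos.2 (inv_pos.2 ht)
    have hRHS : m * (Real.sqrt (t⁻¹ * N) / Real.sqrt (t⁻¹ * (A + t^2 * B)))
        = m * (Real.sqrt N / Real.sqrt (A + t^2 * B)) := by
      rw [hsplit1, hsplit2, mul_div_mul_left _ _ hst.ne']
    rw [hRHS]
    have hineq : Real.sqrt (A + t^2 * B) ≤ m * Real.sqrt (A + B) := by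
      have h1 : Real.sqrt (A + t^2 * B) ≤ Real.sqrt (m^2 * (A + B)) := by
        apply Real.sqrt_le_sqrt
        have h1 : t^2 ≤ m^2 := by nlinarith
        have h2 : (1:ℝ) ≤ m^2 := by nlinarith
        nlinarith [mul_le_mul_of_nonneg_right h1 hB0, mul_le_mul_of_nonneg_right h2 hA0]
      rwa [Real.sqrt_mul (sq_nonneg m), Real.sqrt_sq hm0] at h1
    rw [mul_div_assoc', div_le_div_iff₀ hx hy]
    calc Real.sqrt N * Real.sqrt (A + t^2 * B)
        ≤ Real.sqrt N * (m * Real.sqrt (A + B)) :=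
          mul_le_mul_of_nonneg_left hineq (Real.sqrt_nonneg N)
      _ = m * Real.sqrt N * Real.sqrt (A + B) := by ring

theorem C1_monotone (a b η : ℝ) (hb : 0 < b) (hη0 : 0 < η) (hη1 : η ≤ 1) :
    C1const (tri a (η*b)) ≤ C1const (tri a b) := by
  rw [C1const_eq, C1const_eq]
  by_cases hBdd : BddAbove (Sset (tri a b))
  · apply Real.sSup_le _ (Real.sSup_nonneg (Sset_nonneg _))
    intro r hr
    obtain ⟨r', hr', hle⟩ := step a b (η*b) hb (by positivity) hr
    have hmax : max ((η*b)/b) 1 = 1 := by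
      rw [mul_div_assoc, div_self hb.ne', mul_one]
      exact max_eq_right hη1
    rw [hmax, one_mul] at hle
    exact hle.trans (le_csSup hBdd hr')
  · have hBdd2 : ¬ BddAbove (Sset (tri a (η*b))) := by
      rintro ⟨M, hM⟩
      apply hBdd
      refine ⟨max (b/(η*b)) 1 * M, ?_⟩
      rintro r hr
      obtain ⟨r', hr', hle⟩ := step a (η*b) b (by positivity) hb hr
      have hM' : r' ≤ M := hM hr'
      have h0 : (0:ℝ) ≤ max (b/(η*b)) 1 := zero_le_one.trans (le_max_right _ _)
      exact hle.trans (mul_le_mul_of_nonneg_left hM' h0)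
    rw [Real.sSup_of_not_bddAbove hBdd2, Real.sSup_of_not_bddAbove hBdd]
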